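/- Let F(t) be the fundamental endomorphism of a fanning frame. Writing [A,B]₊ = AB + BA for the anticommutator, one has [F(t), Ḟ(t)]₊ = O, [Ḟ(t), F̈(t)]₊ = O, and [F(t), F̈(t)]₊ = −2I. -/

import Mathlib

open Matrix

noncomputable section

/-- `MDeriv A A'` says that `A'` is the entrywise derivative of the matrix curve `A`. -/
def MDeriv {m k : Type*} (A A' : ℝ → Matrix m k ℝ) : Prop :=
  ∀ (i : m) (j : k) (t : ℝ), HasDerivAt (fun s => A s i j) (A' t i j) t

lemma MDeriv.mul {m k l : Type*} [Fintype k] {A A' : ℝ → Matrix m k ℝ}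
    {B B' : ℝ → Matrix k l ℝ} (hA : MDeriv A A') (hB : MDeriv B B') :
    MDeriv (fun t => A t * B t) (fun t => A' t * B t + A t * B' t) := by
  intro i j t
  simp only [Matrix.mul_apply, Matrix.add_apply, ← Finset.sum_add_distrib]
  exact HasDerivAt.fun_sum fun c _ => (hA i c t).mul (hB c j t)

lemma MDeriv.add {m k : Type*} {A A' B B' : ℝ → Matrix m k ℝ}
    (hA : MDeriv A A') (hB : MDeriv B B') :
    MDeriv (fun t => A t + B t) (fun t => A' t + B' t) := by
  intro i j t
  simpa [Matrix.add_apply] using (hA i j t).fun_add (hB i j t)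

lemma MDeriv.unique {m k : Type*} {A B C : ℝ → Matrix m k ℝ}
    (h1 : MDeriv A B) (h2 : MDeriv A C) : B = C :=
  funext fun t => Matrix.ext fun i j => (h1 i j t).unique (h2 i j t)

lemma mderiv_const {m k : Type*} (C : Matrix m k ℝ) :
    MDeriv (fun _ => C) (fun _ => 0) := fun i j t => by
  simpa using hasDerivAt_const t (C i j)

/-- anticommutator identities for the fundamental endomorphism of a
fanning frame: `[F, Ḟ]₊ = 0`, `[Ḟ, F̈]₊ = 0` and `[F, F̈]₊ = -2·I`. -/
theorem stmt7 {n : ℕ} (A A' A'' : ℝ → Matrix (Fin n ⊕ Fin n) (Fin n) ℝ)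
    (F F' F'' : ℝ → Matrix (Fin n ⊕ Fin n) (Fin n ⊕ Fin n) ℝ)
    (hA : MDeriv A A') (hA' : MDeriv A' A'')
    (hAf : ∀ t, IsUnit (fromCols (A t) (A' t)))
    (hF : ∀ t, F t * A t = 0 ∧ F t * A' t = A t)
    (hF' : MDeriv F F') (hF'' : MDeriv F' F'') :
    ∀ t, F t * F' t + F' t * F t = 0 ∧
      F' t * F'' t + F'' t * F' t = 0 ∧
      F t * F'' t + F'' t * F t = (-2 : ℝ) • (1 : Matrix (Fin n ⊕ Fin n) (Fin n ⊕ Fin n) ℝ) := by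
  have cancel : ∀ t (X Y : Matrix (Fin n ⊕ Fin n) (Fin n ⊕ Fin n) ℝ),
      X * fromCols (A t) (A' t) = Y * fromCols (A t) (A' t) → X = Y :=
    fun t _ _ h => (hAf t).mul_right_cancel h
  -- derivative of F*A = 0 : F'A + FA' = 0
  have e1 : (fun t => F' t * A t + F t * A' t) = (fun _ => (0 : Matrix _ _ ℝ)) := by
    have h := hF'.mul hA
    rw [show (fun t => F t * A t) = (fun _ => (0 : Matrix _ _ ℝ)) from
      funext fun t => (hF t).1] at h
    exact h.unique (mderiv_const 0)
  -- derivative of F*A' = A : F'A' + FA'' = A'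
  have e2 : (fun t => F' t * A' t + F t * A'' t) = A' := by
    have h := hF'.mul hA'
    rw [show (fun t => F t * A' t) = A from funext fun t => (hF t).2] at h
    exact h.unique hA
  -- F'A = -A
  have hF'A : ∀ t, F' t * A t = - A t := by
    intro t
    have h1 := congrFun e1 t
    rw [(hF t).2] at h1
    exact eq_neg_of_add_eq_zero_left h1
  -- F² = 0
  have hFF : (fun t => F t * F t) = (fun _ => (0 : Matrix _ _ ℝ)) := by
    funext t
    apply cancel t
    rw [Matrix.mul_assoc, mul_fromCols, (hF t).1, (hF t).2, mul_fromCols,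
      (hF t).1, Matrix.mul_zero, Matrix.zero_mul, fromCols_zero]
  -- F'² = 1
  have hF'F' : (fun t => F' t * F' t) = (fun _ => (1 : Matrix _ _ ℝ)) := by
    funext t
    apply cancel t
    obtain ⟨Y1, Y2, hA''eq⟩ : ∃ Y1 Y2 : Matrix (Fin n) (Fin n) ℝ, A'' t = A t * Y1 + A' t * Y2 := by
      have hPinv : fromCols (A t) (A' t) * (fromCols (A t) (A' t))⁻¹ = 1 :=
        Matrix.mul_nonsing_inv _ ((Matrix.isUnit_iff_isUnit_det _).mp (hAf t))
      refine ⟨((fromCols (A t) (A' t))⁻¹ * A'' t).toRows₁,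
        ((fromCols (A t) (A' t))⁻¹ * A'' t).toRows₂, ?_⟩
      rw [← fromCols_mul_fromRows, fromRows_toRows, ← Matrix.mul_assoc, hPinv,
        Matrix.one_mul]
    have hFA'' : F t * A'' t = A t * Y2 := by
      rw [hA''eq, Matrix.mul_add, ← Matrix.mul_assoc, ← Matrix.mul_assoc,
        (hF t).1, (hF t).2, Matrix.zero_mul, zero_add]
    have hF'A' : F' t * A' t = A' t - A t * Y2 := by
      have h2 := congrFun e2 t
      rw [hFA''] at h2
      exact eq_sub_of_add_eq h2
    rw [Matrix.mul_assoc, mul_fromCols, hF'A t, hF'A', mul_fromCols,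
      Matrix.mul_neg, hF'A t, neg_neg, Matrix.mul_sub, hF'A',
      ← Matrix.mul_assoc, hF'A t, Matrix.one_mul, Matrix.neg_mul, sub_neg_eq_add, sub_add_cancel]
  -- derivative of F² = 0 : F'F + FF' = 0
  have e3 : (fun t => F' t * F t + F t * F' t) = (fun _ => (0 : Matrix _ _ ℝ)) := by
    have h := hF'.mul hF'
    rw [hFF] at h
    exact h.unique (mderiv_const 0)
  -- derivative of F'² = 1 : F''F' + F'F'' = 0
  have e4 : (fun t => F'' t * F' t + F' t * F'' t) = (fun _ => (0 : Matrix _ _ ℝ)) := by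
    have h := hF''.mul hF''
    rw [hF'F'] at h
    exact h.unique (mderiv_const 1)
  -- derivative of F'F + FF' = 0
  have e5 : (fun t => (F'' t * F t + F' t * F' t) + (F' t * F' t + F t * F'' t)) =
      (fun _ => (0 : Matrix _ _ ℝ)) := by
    have h := (hF''.mul hF').add (hF'.mul hF'')
    rw [e3] at h
    exact h.unique (mderiv_const 0)
  intro t
  refine ⟨?_, ?_, ?_⟩
  · rw [add_comm]
    exact congrFun e3 t
  · rw [add_comm]
    exact congrFun e4 t
  · have h5 := congrFun e5 t
    simp only [congrFun hF'F' t] at h5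
    calc F t * F'' t + F'' t * F t
        = (F'' t * F t + 1 + (1 + F t * F'' t)) - (1 + 1) := by abel
      _ = 0 - (1 + 1) := by rw [h5]
      _ = (-2 : ℝ) • 1 := by rw [zero_sub, neg_smul, two_smul]
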